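/- For f(x) = M|x − (a+b)/2| on [a,b], the inverse LB-BD function satisfies γ_f^{-1}(σ) = max{0, M − 4σ/(b−a)}. -/

import Mathlib

/-!
An `n`-Lipschitz function within `σ` of `f` forces `|f x - f y| ≤ n |x - y| + 2σ`; comparing the
endpoint `a` with the apex `(a+b)/2`, where `f` rises by `M (b-a)/2`, gives `n ≥ M - 4σ/(b-a)`.
Conversely the flatter tent `m |x - (a+b)/2| + σ` with `m = max 0 (M - 4σ/(b-a))` is
`m`-Lipschitz and stays within `σ` of `f`, because `0 ≤ (M - m) |x - (a+b)/2| ≤ 2σ` on `[a,b]`.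
-/

/-- Inverse LB-BD function: smallest Lipschitz constant achievable within sup-norm
distance `σ` of `f`. -/
noncomputable def gammaInv (a b : ℝ) (f : ℝ → ℝ) (σ : ℝ) : ℝ :=
  sInf {m : ℝ | 0 ≤ m ∧ ∃ g : ℝ → ℝ,
    (∀ x ∈ Set.Icc a b, ∀ y ∈ Set.Icc a b, |g x - g y| ≤ m * |x - y|) ∧
    ∀ x ∈ Set.Icc a b, |f x - g x| ≤ σ}

open Set

section Approximation

variable {s : Set ℝ} {f g : ℝ → ℝ} {m σ : ℝ}

theorem abs_sub_le_of_approx_lipschitz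
    (hlip : ∀ x ∈ s, ∀ y ∈ s, |g x - g y| ≤ m * |x - y|) (happ : ∀ x ∈ s, |f x - g x| ≤ σ)
    {x y : ℝ} (hx : x ∈ s) (hy : y ∈ s) : |f x - f y| ≤ m * |x - y| + 2 * σ := by
  have := abs_sub_le (f x) (g x) (f y)
  have := abs_sub_le (g x) (g y) (f y)
  linarith [abs_sub_comm (g y) (f y), happ x hx, happ y hy, hlip x hx y hy]

end Approximation

section Tent

variable {a b M m σ : ℝ}

theorem abs_mul_abs_sub_sub_le (hm : 0 ≤ m) (c x y : ℝ) :
    |(m * |x - c| - m * |y - c|)| ≤ m * |x - y| := by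
  rw [← mul_sub, abs_mul, abs_of_nonneg hm]
  refine mul_le_mul_of_nonneg_left ?_ hm
  simpa using abs_abs_sub_abs_le_abs_sub (x - c) (y - c)

theorem abs_sub_midpoint_le {x : ℝ} (hx : x ∈ Icc a b) : |x - (a + b) / 2| ≤ (b - a) / 2 := by
  rw [abs_le]; constructor <;> linarith [hx.1, hx.2]

theorem sub_le_of_approx_tent (hab : a < b) {g : ℝ → ℝ}
    (hlip : ∀ x ∈ Icc a b, ∀ y ∈ Icc a b, |g x - g y| ≤ m * |x - y|)
    (happ : ∀ x ∈ Icc a b, |M * |x - (a + b) / 2| - g x| ≤ σ) :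
    M - 4 * σ / (b - a) ≤ m := by
  have ha : a ∈ Icc a b := left_mem_Icc.2 hab.le
  have hc : (a + b) / 2 ∈ Icc a b := ⟨by linarith, by linarith⟩
  have key := abs_sub_le_of_approx_lipschitz hlip happ ha hc
  have hac : |a - (a + b) / 2| = (b - a) / 2 := by
    rw [abs_of_nonpos (by linarith)]; ring
  have hrise : M * ((b - a) / 2) ≤ m * ((b - a) / 2) + 2 * σ := by
    simpa [hac] using (le_abs_self _).trans key
  suffices M - m ≤ 4 * σ / (b - a) by linarith
  rw [le_div_iff₀ (sub_pos.2 hab)]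
  linarith

theorem abs_tent_sub_flatter_tent_le (hab : a < b) (hmM : m ≤ M)
    (hslope : M - m ≤ 4 * σ / (b - a)) {x : ℝ} (hx : x ∈ Icc a b) :
    |M * |x - (a + b) / 2| - (m * |x - (a + b) / 2| + σ)| ≤ σ := by
  have hdiff : (M - m) * |x - (a + b) / 2| ≤ 2 * σ :=
    calc (M - m) * |x - (a + b) / 2| ≤ 4 * σ / (b - a) * ((b - a) / 2) :=
          mul_le_mul hslope (abs_sub_midpoint_le hx) (abs_nonneg _) ((sub_nonneg.2 hmM).trans hslope)
      _ = 2 * σ := by field_simp [(sub_pos.2 hab).ne']; ring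
  have hpos : 0 ≤ (M - m) * |x - (a + b) / 2| := mul_nonneg (sub_nonneg.2 hmM) (abs_nonneg _)
  rw [abs_le]
  constructor <;> nlinarith

theorem isLeast_lipschitz_approx_tent (hab : a < b) (hM : 0 ≤ M) (hσ : 0 ≤ σ) :
    IsLeast {m : ℝ | 0 ≤ m ∧ ∃ g : ℝ → ℝ,
      (∀ x ∈ Icc a b, ∀ y ∈ Icc a b, |g x - g y| ≤ m * |x - y|) ∧
      ∀ x ∈ Icc a b, |M * |x - (a + b) / 2| - g x| ≤ σ} (max 0 (M - 4 * σ / (b - a))) := by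
  set m := max 0 (M - 4 * σ / (b - a))
  have hm : 0 ≤ m := le_max_left _ _
  have hmM : m ≤ M := max_le hM (sub_le_self _ (div_nonneg (by linarith) (by linarith)))
  have hslope : M - m ≤ 4 * σ / (b - a) := by linarith [le_max_right 0 (M - 4 * σ / (b - a))]
  refine ⟨⟨hm, fun x => m * |x - (a + b) / 2| + σ, ?_, ?_⟩, ?_⟩
  · intro x _ y _
    simpa using abs_mul_abs_sub_sub_le hm ((a + b) / 2) x y
  · exact fun x hx => abs_tent_sub_flatter_tent_le hab hmM hslope hx
  · rintro n ⟨hn, g, hlip, happ⟩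
    exact max_le hn (sub_le_of_approx_tent hab hlip happ)

end Tent

/-- For `f(x) = M|x - (a+b)/2|` on `[a,b]`: `γ_f⁻¹(σ) = max {0, M - 4σ/(b-a)}`. -/
theorem stmt_16 (a b M σ : ℝ) (hab : a < b) (hM : 0 < M) (hσ : 0 ≤ σ) :
    gammaInv a b (fun x => M * |x - (a + b) / 2|) σ = max 0 (M - 4 * σ / (b - a)) :=
  (isLeast_lipschitz_approx_tent hab hM.le hσ).csInf_eq
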